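/- arXiv:2206.08552 — 4 statements merged into one kernel-verified Lean document; each statement's English description precedes it below -/
import Mathlib

section
/- Let φ be a Bernstein function without drift which satisfies the lower weak scaling condition: there exist a₁ > 0 and δ₁ ∈ (0,1) such that a₁ λ^{δ₁} φ(t) ≤ φ(λt) for all t ≥ 1 and λ ≥ 1. Then there exists a constant c ∈ (0,1] such that c·φ(λ)/λ ≤ φ'(λ) ≤ φ(λ)/λ for all λ ≥ 1. -/
open MeasureTheory Real Set Filter

/-! Since `e^{-a} - e^{-b} ≤ (b - a) e^{-a}`, integrating against the Lévy measure gives the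
tangent-line inequality `φ(y) - φ(x) ≤ (y - x) φ'(x)` of the concave function `φ`.
At `y = 0` it reads `λ φ'(λ) ≤ φ(λ)`. At `y = Lλ`, with `L ≥ 2` so large that
`a₁ L^{δ₁} ≥ 2`, lower scaling gives `φ(λ) ≤ φ(Lλ) - φ(λ) ≤ (L - 1) λ φ'(λ)`, so
`c = 1 / (L - 1)` works. Differentiation under the integral sign is justified by
dominating `t e^{-xt}`, locally uniformly in `x > 0`, by a multiple of `min 1 t`. -/

lemma exp_neg_sub_exp_neg_le (a b : ℝ) : exp (-a) - exp (-b) ≤ (b - a) * exp (-a) := by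
  have h := one_sub_le_exp_neg (b - a)
  have hsplit : exp (-b) = exp (-a) * exp (-(b - a)) := by rw [← exp_add]; ring_nf
  rw [hsplit]
  nlinarith [exp_pos (-a)]

lemma mul_exp_neg_mul_le_max_mul_min {a x t : ℝ} (ha : 0 < a) (hax : a ≤ x) (ht : 0 ≤ t) :
    t * exp (-(x * t)) ≤ max 1 a⁻¹ * min 1 t := by
  have h_le_t : t * exp (-(x * t)) ≤ t :=
    mul_le_of_le_one_right ht (exp_le_one_iff.mpr (by nlinarith))
  have h_le_inv : t * exp (-(x * t)) ≤ a⁻¹ :=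
    calc t * exp (-(x * t)) ≤ t * exp (-(a * t)) :=
          mul_le_mul_of_nonneg_left (exp_le_exp.mpr (by nlinarith)) ht
      _ = a⁻¹ * (a * t * exp (-(a * t))) := by field_simp
      _ ≤ a⁻¹ * 1 := by
          gcongr
          exact (mul_exp_neg_le_exp_neg_one _).trans (exp_le_one_iff.mpr (by norm_num))
      _ = a⁻¹ := mul_one _
  rcases le_total t 1 with h | h
  · rw [min_eq_right h]
    nlinarith [le_max_left 1 a⁻¹]
  · rw [min_eq_left h, mul_one]
    exact h_le_inv.trans (le_max_right _ _)

lemma integrable_min_one_restrict_Ioi {μ : Measure ℝ}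
    (h : ∫⁻ t in Ioi 0, ENNReal.ofReal (min 1 t) ∂μ < ⊤) :
    Integrable (fun t => min 1 t) (μ.restrict (Ioi 0)) :=
  ⟨by fun_prop, (hasFiniteIntegral_iff_ofReal (ae_restrict_of_forall_mem measurableSet_Ioi
    fun t ht => le_min zero_le_one (le_of_lt ht))).mpr h⟩

lemma exists_two_le_mul_rpow {a δ : ℝ} (ha : 0 < a) (hδ : 0 < δ) :
    ∃ L ≥ (2 : ℝ), 2 ≤ a * L ^ δ :=
  ((eventually_ge_atTop 2).and
    (((tendsto_rpow_atTop hδ).const_mul_atTop ha).eventually_ge_atTop 2)).exists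

noncomputable def bernsteinFn (ν : Measure ℝ) (x : ℝ) : ℝ := ∫ t, (1 - exp (-(x * t))) ∂ν

section

variable {ν : Measure ℝ}

@[simp]
lemma bernsteinFn_zero : bernsteinFn ν 0 = 0 := by simp [bernsteinFn]

lemma bernsteinFn_nonneg (hpos : ∀ᵐ t ∂ν, 0 ≤ t) {x : ℝ} (hx : 0 ≤ x) : 0 ≤ bernsteinFn ν x :=
  integral_nonneg_of_ae <| hpos.mono fun t ht =>
    sub_nonneg.mpr (exp_le_one_iff.mpr (by nlinarith))

lemma integrable_mul_exp_neg_mul (hpos : ∀ᵐ t ∂ν, 0 < t)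
    (hmin : Integrable (fun t => min 1 t) ν) {x : ℝ} (hx : 0 < x) :
    Integrable (fun t => t * exp (-(x * t))) ν :=
  (hmin.const_mul (max 1 x⁻¹)).mono' (by fun_prop) <| hpos.mono fun t ht => by
    rw [norm_of_nonneg (by positivity)]
    exact mul_exp_neg_mul_le_max_mul_min hx le_rfl ht.le

lemma hasDerivAt_bernsteinFn (hpos : ∀ᵐ t ∂ν, 0 < t) (hmin : Integrable (fun t => min 1 t) ν) {x : ℝ}
    (hx : 0 < x) (hint : Integrable (fun t => 1 - exp (-(x * t))) ν) :
    HasDerivAt (bernsteinFn ν) (∫ t, t * exp (-(x * t)) ∂ν) x := by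
  refine (hasDerivAt_integral_of_dominated_loc_of_deriv_le
    (F' := fun y t => t * exp (-(y * t))) (bound := fun t => max 1 (x / 2)⁻¹ * min 1 t)
    (Metric.ball_mem_nhds x (half_pos hx)) (Eventually.of_forall fun _ => by fun_prop) hint
    (by fun_prop) ?_ (hmin.const_mul _) ?_).2
  · filter_upwards [hpos] with t ht y hy
    have hxy : x / 2 ≤ y := by
      rw [Metric.mem_ball, dist_eq] at hy
      linarith [(abs_lt.mp hy).1]
    rw [norm_of_nonneg (by positivity)]
    exact mul_exp_neg_mul_le_max_mul_min (half_pos hx) hxy ht.le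
  · refine Eventually.of_forall fun t y _ => ?_
    have h : HasDerivAt (fun y => -(y * t)) (-t) y := (hasDerivAt_mul_const t).neg
    convert h.exp.const_sub 1 using 1
    ring

lemma bernsteinFn_sub_le {x y : ℝ} (hx : Integrable (fun t => 1 - exp (-(x * t))) ν)
    (hy : Integrable (fun t => 1 - exp (-(y * t))) ν)
    (hd : Integrable (fun t => t * exp (-(x * t))) ν) :
    bernsteinFn ν y - bernsteinFn ν x ≤ (y - x) * ∫ t, t * exp (-(x * t)) ∂ν := by
  rw [bernsteinFn, bernsteinFn, ← integral_sub hy hx, ← integral_const_mul]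
  refine integral_mono (hy.sub hx) (hd.const_mul _) fun t => ?_
  have h := exp_neg_sub_exp_neg_le (x * t) (y * t)
  linarith

lemma mul_integral_le_bernsteinFn {x : ℝ} (hx : Integrable (fun t => 1 - exp (-(x * t))) ν)
    (hd : Integrable (fun t => t * exp (-(x * t))) ν) :
    x * ∫ t, t * exp (-(x * t)) ∂ν ≤ bernsteinFn ν x := by
  have h := bernsteinFn_sub_le hx (y := 0) (by simp) hd
  simp only [bernsteinFn_zero, zero_sub, neg_mul] at h
  linarith

end

theorem bernstein_deriv_comparable_general
    (φ : ℝ → ℝ) (μ : Measure ℝ)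
    (hμfin : ∫⁻ t in Ioi (0 : ℝ), ENNReal.ofReal (min 1 t) ∂μ < ⊤)
    (hint : ∀ l > (0 : ℝ), IntegrableOn (fun t => 1 - Real.exp (-(l * t))) (Ioi 0) μ)
    (hφ : ∀ l > (0 : ℝ), φ l = ∫ t in Ioi (0 : ℝ), (1 - Real.exp (-(l * t))) ∂μ)
    (a₁ δ₁ : ℝ) (ha₁ : 0 < a₁) (hδ₁ : δ₁ ∈ Ioo (0 : ℝ) 1)
    (hscal : ∀ t ≥ (1 : ℝ), ∀ l ≥ (1 : ℝ), a₁ * l ^ δ₁ * φ t ≤ φ (l * t)) :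
    ∃ c : ℝ, c ∈ Ioc (0 : ℝ) 1 ∧
      ∀ l ≥ (1 : ℝ), c * (φ l / l) ≤ deriv φ l ∧ deriv φ l ≤ φ l / l := by
  set ν := μ.restrict (Ioi (0 : ℝ))
  have hpos : ∀ᵐ t ∂ν, 0 < t := ae_restrict_mem measurableSet_Ioi
  have hmin := integrable_min_one_restrict_Ioi hμfin
  have hφν : ∀ l > 0, φ l = bernsteinFn ν l := hφ
  obtain ⟨L, hL2, hLscal⟩ := exists_two_le_mul_rpow ha₁ hδ₁.1
  refine ⟨(L - 1)⁻¹, ⟨inv_pos.mpr (by linarith), inv_le_one_of_one_le₀ (by linarith)⟩,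
    fun l hl => ?_⟩
  have hl0 : 0 < l := by linarith
  have hLl : 0 < L * l := by positivity
  have hD := integrable_mul_exp_neg_mul hpos hmin hl0
  have hderiv : deriv φ l = ∫ t, t * exp (-(l * t)) ∂ν :=
    ((hasDerivAt_bernsteinFn hpos hmin hl0 (hint l hl0)).congr_of_eventuallyEq
      (eventually_of_mem (Ioi_mem_nhds hl0) hφν)).deriv
  have hdouble : 2 * φ l ≤ φ (L * l) :=
    calc 2 * φ l ≤ a₁ * L ^ δ₁ * φ l :=
          mul_le_mul_of_nonneg_right hLscal (hφν l hl0 ▸ bernsteinFn_nonneg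
            (hpos.mono fun _ ht => ht.le) hl0.le)
      _ ≤ φ (L * l) := hscal l hl L (by linarith)
  have htangent := bernsteinFn_sub_le (hint l hl0) (hint (L * l) hLl) hD
  have hup := mul_integral_le_bernsteinFn (hint l hl0) hD
  rw [← hφν l hl0, ← hφν _ hLl] at htangent
  rw [← hφν l hl0] at hup
  rw [hderiv, inv_mul_le_iff₀ (by linarith), div_le_iff₀ hl0, le_div_iff₀ hl0]
  constructor <;> nlinarith

/-- If `φ` is a Bernstein function without drift satisfying the lower
weak scaling condition (`a₁ λ^{δ₁} φ(t) ≤ φ(λt)` for `t, λ ≥ 1`), then there is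
`c ∈ (0,1]` with `c·φ(λ)/λ ≤ φ'(λ) ≤ φ(λ)/λ` for all `λ ≥ 1`. -/
theorem bernstein_deriv_comparable
    (φ : ℝ → ℝ) (μ : Measure ℝ)
    (hμne : μ (Ioi (0 : ℝ)) ≠ 0)
    (hμfin : ∫⁻ t in Ioi (0 : ℝ), ENNReal.ofReal (min 1 t) ∂μ < ⊤)
    (hint : ∀ l > (0 : ℝ), IntegrableOn (fun t => 1 - Real.exp (-(l * t))) (Ioi 0) μ)
    (hφ : ∀ l > (0 : ℝ), φ l = ∫ t in Ioi (0 : ℝ), (1 - Real.exp (-(l * t))) ∂μ)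
    (a₁ δ₁ : ℝ) (ha₁ : 0 < a₁) (hδ₁ : δ₁ ∈ Ioo (0 : ℝ) 1)
    (hscal : ∀ t ≥ (1 : ℝ), ∀ l ≥ (1 : ℝ), a₁ * l ^ δ₁ * φ t ≤ φ (l * t)) :
    ∃ c : ℝ, c ∈ Ioc (0 : ℝ) 1 ∧
      ∀ l ≥ (1 : ℝ), c * (φ l / l) ≤ deriv φ l ∧ deriv φ l ≤ φ l / l :=
  bernstein_deriv_comparable_general φ μ hμfin hint hφ a₁ δ₁ ha₁ hδ₁ hscal
end

section
/- Let φ be a Bernstein function without drift and let P satisfy the sharp Poisson kernel estimate for φ. Then there is a constant C ≥ 1, depending only on d, φ and c₀, such that for every x ∈ B: C^{−1} · δ(x)^{−2} φ(δ(x)^{−2})^{−1} ≤ ∫_{∂B} P(x,z) σ(dz) ≤ C · δ(x)^{−2} φ(δ(x)^{−2})^{−1}. -/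
/-!
Write `δ = 1 - ‖x‖`, so that `δ ≤ ‖x - z‖ ≤ 2` on the sphere. A Bernstein function inherits from
`λ ↦ 1 - exp (-λ t)` that it is nondecreasing and that `φ λ / λ` is nonincreasing; with these the
sharp estimate gives `P(x, z) ≲ (δ φ(δ⁻²))⁻¹ ‖x - z‖⁻ᵈ` everywhere, and `P(x, z) ≳ δ⁻ᵈ⁻¹ φ(δ⁻²)⁻¹`
on the cap of radius `δ` around the boundary point nearest to `x`.

Caps of radius `r` have surface measure `≍ r^(d-1)`: a reflection moves the centre to the north
pole, near which the sphere is a Lipschitz graph over the equatorial plane, and the projection to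
that plane is 1-Lipschitz. Summing the upper bound over dyadic annuli `2ᵏδ ≤ ‖x - z‖ < 2ᵏ⁺¹δ`
gives `∫ ‖x - z‖⁻ᵈ dσ ≲ δ⁻¹`, while the cap has measure `≳ δ^(d-1)`; both sides are therefore
`≍ δ⁻² φ(δ⁻²)⁻¹`.
-/

open MeasureTheory Real Set Metric
open scoped ENNReal NNReal

local notation "ℝ^" n => EuclideanSpace ℝ (Fin n)

lemma abs_sqrt_one_sub_sq_sub_sqrt_one_sub_sq_le {η s t : ℝ} (hη : 0 < η) (hs : 0 ≤ s)
    (ht : 0 ≤ t) (hηs : η ≤ √(1 - s ^ 2)) (hηt : η ≤ √(1 - t ^ 2)) :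
    |√(1 - s ^ 2) - √(1 - t ^ 2)| ≤ η⁻¹ * |s - t| := by
  set a := √(1 - s ^ 2)
  set b := √(1 - t ^ 2)
  have ha : a ^ 2 = 1 - s ^ 2 := Real.sq_sqrt (Real.sqrt_pos.1 (hη.trans_le hηs)).le
  have hb : b ^ 2 = 1 - t ^ 2 := Real.sq_sqrt (Real.sqrt_pos.1 (hη.trans_le hηt)).le
  have hprod : |a - b| * (a + b) = |s - t| * (s + t) := by
    rw [← abs_of_nonneg (by linarith : 0 ≤ a + b), ← abs_of_nonneg (by linarith : 0 ≤ s + t),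
      ← abs_mul, ← abs_mul, ← abs_neg ((s - t) * (s + t))]
    congr 1
    linear_combination ha - hb
  have hs1 : s ≤ 1 := by nlinarith
  have ht1 : t ≤ 1 := by nlinarith
  -- divide `hprod` by `a + b ≥ 2η` and use `s + t ≤ 2`
  rw [inv_mul_eq_div, le_div_iff₀ hη]
  nlinarith [abs_nonneg (a - b), abs_nonneg (s - t)]

namespace EuclideanSpace

variable {n : ℕ}

def tail (z : ℝ^(n + 1)) : ℝ^n := WithLp.toLp 2 (Fin.tail z.ofLp)

def cons (a : ℝ) (y : ℝ^n) : ℝ^(n + 1) := WithLp.toLp 2 (Fin.cons a y.ofLp)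

@[simp] lemma cons_apply_zero (a : ℝ) (y : ℝ^n) : cons a y 0 = a := rfl

@[simp] lemma cons_apply_succ (a : ℝ) (y : ℝ^n) (i : Fin n) : cons a y i.succ = y i := rfl

@[simp] lemma tail_cons (a : ℝ) (y : ℝ^n) : tail (cons a y) = y := rfl

@[simp] lemma cons_self_tail (z : ℝ^(n + 1)) : cons (z 0) (tail z) = z := by
  ext i; cases i using Fin.cases <;> rfl

lemma cons_sub_cons (a b : ℝ) (y y' : ℝ^n) : cons a y - cons b y' = cons (a - b) (y - y') := by
  ext i; cases i using Fin.cases <;> rfl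

lemma norm_cons_sq (a : ℝ) (y : ℝ^n) : ‖cons a y‖ ^ 2 = a ^ 2 + ‖y‖ ^ 2 := by
  simp [EuclideanSpace.norm_sq_eq, Fin.sum_univ_succ]

lemma norm_sq_eq_sq_add_norm_tail_sq (z : ℝ^(n + 1)) : ‖z‖ ^ 2 = z 0 ^ 2 + ‖tail z‖ ^ 2 := by
  rw [← norm_cons_sq, cons_self_tail]

@[simp] lemma tail_sub (z w : ℝ^(n + 1)) : tail (z - w) = tail z - tail w := rfl

lemma norm_cons_le (a : ℝ) (y : ℝ^n) : ‖cons a y‖ ≤ |a| + ‖y‖ := by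
  refine (pow_le_pow_iff_left₀ (norm_nonneg _) (by positivity) two_ne_zero).1 ?_
  rw [norm_cons_sq]
  nlinarith [sq_abs a, abs_nonneg a, norm_nonneg y]

lemma norm_tail_le (z : ℝ^(n + 1)) : ‖tail z‖ ≤ ‖z‖ := by
  refine (pow_le_pow_iff_left₀ (norm_nonneg _) (norm_nonneg _) two_ne_zero).1 ?_
  rw [norm_sq_eq_sq_add_norm_tail_sq z]
  nlinarith [sq_nonneg (z 0)]

lemma lipschitzWith_tail : LipschitzWith 1 (tail : (ℝ^(n + 1)) → ℝ^n) :=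
  LipschitzWith.of_dist_le_mul fun z w => by
    simpa [dist_eq_norm] using norm_tail_le (z - w)

noncomputable def hemisphereGraph (y : ℝ^n) : ℝ^(n + 1) := cons √(1 - ‖y‖ ^ 2) y

lemma hemisphereGraph_tail {z : ℝ^(n + 1)} (hz : ‖z‖ = 1) (h0 : 0 ≤ z 0) :
    hemisphereGraph (tail z) = z := by
  have h : 1 - ‖tail z‖ ^ 2 = z 0 ^ 2 := by nlinarith [norm_sq_eq_sq_add_norm_tail_sq z]
  rw [hemisphereGraph, h, Real.sqrt_sq h0, cons_self_tail]

lemma norm_hemisphereGraph {y : ℝ^n} (hy : ‖y‖ ≤ 1) : ‖hemisphereGraph y‖ = 1 := by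
  refine (pow_eq_one_iff_of_nonneg (norm_nonneg _) two_ne_zero).1 ?_
  rw [hemisphereGraph, norm_cons_sq, Real.sq_sqrt (by nlinarith [norm_nonneg y])]
  ring

lemma norm_sub_cons_one_zero_sq {z : ℝ^(n + 1)} (hz : ‖z‖ = 1) :
    ‖z - cons 1 0‖ ^ 2 = 2 - 2 * z 0 := by
  conv_lhs => rw [← cons_self_tail z]
  rw [cons_sub_cons, sub_zero, norm_cons_sq]
  nlinarith [norm_sq_eq_sq_add_norm_tail_sq z]

lemma norm_cons_one_zero : ‖(cons 1 0 : ℝ^(n + 1))‖ = 1 := by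
  refine (pow_eq_one_iff_of_nonneg (norm_nonneg _) two_ne_zero).1 ?_
  simp [norm_cons_sq]

lemma lipschitzOnWith_hemisphereGraph {η : ℝ≥0} (hη : 0 < η) :
    LipschitzOnWith (1 + η⁻¹) hemisphereGraph {y : ℝ^n | (η : ℝ) ≤ √(1 - ‖y‖ ^ 2)} := by
  refine LipschitzOnWith.of_dist_le_mul fun y hy y' hy' => ?_
  rw [dist_eq_norm, dist_eq_norm, hemisphereGraph, hemisphereGraph, cons_sub_cons]
  calc _ ≤ |√(1 - ‖y‖ ^ 2) - √(1 - ‖y'‖ ^ 2)| + ‖y - y'‖ := norm_cons_le _ _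
    _ ≤ (η : ℝ)⁻¹ * |‖y‖ - ‖y'‖| + ‖y - y'‖ := by
        gcongr
        exact abs_sqrt_one_sub_sq_sub_sqrt_one_sub_sq_le hη (norm_nonneg _) (norm_nonneg _) hy hy'
    _ ≤ (η : ℝ)⁻¹ * ‖y - y'‖ + ‖y - y'‖ := by gcongr; exact abs_norm_sub_norm_le y y'
    _ = ↑(1 + η⁻¹) * ‖y - y'‖ := by push_cast; ring

end EuclideanSpace

section Caps

open EuclideanSpace

lemma hausdorffMeasure_sphere_inter_closedBall_congr {E : Type*} [NormedAddCommGroup E]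
    [InnerProductSpace ℝ E] [MeasurableSpace E] [BorelSpace E] {u v : E} (h : ‖u‖ = ‖v‖)
    (s R r : ℝ) :
    μH[s] (sphere (0 : E) R ∩ closedBall u r) = μH[s] (sphere (0 : E) R ∩ closedBall v r) := by
  let f := Submodule.reflection (ℝ ∙ (u - v))ᗮ
  have hfu : f u = v := Submodule.reflection_sub h
  rw [← f.toIsometryEquiv.hausdorffMeasure_image, image_inter f.toIsometryEquiv.injective]
  simp [hfu]

variable {n : ℕ}

lemma hausdorffMeasure_closedBall_euclidean (x : ℝ^n) {r : ℝ} (hr : 0 ≤ r) :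
    μH[n] (closedBall x r) = ENNReal.ofReal r ^ n * μH[n] (ball (0 : ℝ^n) 1) := by
  have h := Measure.addHaar_closedBall μH[Module.finrank ℝ (ℝ^n)] x hr
  rwa [finrank_euclideanSpace_fin, ENNReal.ofReal_pow hr] at h

lemma hausdorffMeasure_ball_euclidean_pos : 0 < μH[n] (ball (0 : ℝ^n) 1) := by
  have h := measure_ball_pos μH[Module.finrank ℝ (ℝ^n)] (0 : ℝ^n) one_pos
  rwa [finrank_euclideanSpace_fin] at h

lemma hausdorffMeasure_ball_euclidean_lt_top : μH[n] (ball (0 : ℝ^n) 1) < ∞ := by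
  have h := measure_ball_lt_top (μ := μH[Module.finrank ℝ (ℝ^n)]) (x := (0 : ℝ^n)) (r := 1)
  rwa [finrank_euclideanSpace_fin] at h

lemma hausdorffMeasure_sphere_inter_closedBall_le {z₀ : ℝ^(n + 1)} (hz₀ : ‖z₀‖ = 1) {r : ℝ}
    (hr : r ≤ 1) :
    μH[n] (sphere 0 1 ∩ closedBall z₀ r) ≤ 3 ^ n * μH[n] (closedBall (0 : ℝ^n) r) := by
  rw [hausdorffMeasure_sphere_inter_closedBall_congr (hz₀.trans norm_cons_one_zero.symm)]
  -- near the pole `z 0 ≥ 1/2`, where the sphere is a `3`-Lipschitz graph over its tail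
  have hsub : sphere 0 1 ∩ closedBall (cons 1 0) r ⊆
      hemisphereGraph '' (closedBall 0 r ∩ {y : ℝ^n | ((2⁻¹ : ℝ≥0) : ℝ) ≤ √(1 - ‖y‖ ^ 2)}) := by
    rintro z ⟨hz, hzr⟩
    rw [mem_sphere_zero_iff_norm] at hz
    rw [mem_closedBall, dist_eq_norm] at hzr
    have hz0 : 2⁻¹ ≤ z 0 := by
      nlinarith [norm_sub_cons_one_zero_sq hz, norm_nonneg (z - cons 1 0)]
    refine ⟨tail z, ⟨?_, ?_⟩, hemisphereGraph_tail hz (by linarith)⟩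
    · simpa using (norm_tail_le (z - cons 1 0)).trans hzr
    · have h : 1 - ‖tail z‖ ^ 2 = z 0 ^ 2 := by nlinarith [norm_sq_eq_sq_add_norm_tail_sq z]
      change _ ≤ √(1 - ‖tail z‖ ^ 2)
      rw [h, Real.sqrt_sq (by linarith)]
      simpa using hz0
  calc _ ≤ μH[n] (hemisphereGraph '' _) := measure_mono hsub
    _ ≤ ↑(1 + (2⁻¹ : ℝ≥0)⁻¹) ^ (n : ℝ) * μH[n] (closedBall (0 : ℝ^n) r ∩ _) :=
        ((lipschitzOnWith_hemisphereGraph (by norm_num)).mono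
          inter_subset_right).hausdorffMeasure_image_le (Nat.cast_nonneg n)
    _ ≤ 3 ^ n * μH[n] (closedBall (0 : ℝ^n) r) := by
        rw [ENNReal.rpow_natCast, inv_inv]
        gcongr
        · norm_num
        · exact inter_subset_left

lemma hausdorffMeasure_closedBall_le_sphere_inter_closedBall {z₀ : ℝ^(n + 1)} (hz₀ : ‖z₀‖ = 1)
    {ρ : ℝ} (hρ₀ : 0 ≤ ρ) (hρ : ρ ≤ 1) :
    μH[n] (closedBall (0 : ℝ^n) (ρ / 2)) ≤ μH[n] (sphere 0 1 ∩ closedBall z₀ ρ) := by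
  rw [hausdorffMeasure_sphere_inter_closedBall_congr (hz₀.trans norm_cons_one_zero.symm)]
  have hsub : closedBall (0 : ℝ^n) (ρ / 2) ⊆ tail '' (sphere 0 1 ∩ closedBall (cons 1 0) ρ) := by
    intro y hy
    rw [mem_closedBall_zero_iff] at hy
    have hy1 : ‖y‖ ≤ 1 := by linarith
    refine ⟨hemisphereGraph y, ⟨?_, ?_⟩, tail_cons _ _⟩
    · exact mem_sphere_zero_iff_norm.2 (norm_hemisphereGraph hy1)
    · have hsq := norm_sub_cons_one_zero_sq (norm_hemisphereGraph hy1)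
      set a := √(1 - ‖y‖ ^ 2)
      have ha : a ^ 2 = 1 - ‖y‖ ^ 2 := Real.sq_sqrt (by nlinarith [norm_nonneg y])
      have ha1 : a ≤ 1 := Real.sqrt_le_one.2 (by nlinarith [norm_nonneg y])
      rw [mem_closedBall, dist_eq_norm]
      refine (pow_le_pow_iff_left₀ (norm_nonneg _) hρ₀ two_ne_zero).1 ?_
      rw [hsq, hemisphereGraph, cons_apply_zero]
      nlinarith [Real.sqrt_nonneg (1 - ‖y‖ ^ 2), norm_nonneg y]
  calc _ ≤ μH[n] (tail '' (sphere 0 1 ∩ closedBall (cons 1 0) ρ)) := measure_mono hsub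
    _ ≤ (1 : ℝ≥0) ^ (n : ℝ) * μH[n] (sphere 0 1 ∩ closedBall (cons 1 0) ρ) :=
        lipschitzWith_tail.hausdorffMeasure_image_le (Nat.cast_nonneg n) _
    _ = _ := by simp

lemma hausdorffMeasure_sphere_lt_top : μH[n] (sphere (0 : ℝ^(n + 1)) 1) < ∞ := by
  obtain ⟨t, hts, ht, hcover⟩ := (isCompact_sphere (0 : ℝ^(n + 1)) 1).elim_finite_subcover_image
    (fun z _ => isOpen_ball (x := z) (ε := 1)) fun z hz => mem_biUnion hz (mem_ball_self one_pos)
  have hsub : sphere (0 : ℝ^(n + 1)) 1 ⊆ ⋃ z ∈ t, sphere 0 1 ∩ closedBall z 1 := fun w hw => by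
    obtain ⟨z, hz, hwz⟩ := mem_iUnion₂.1 (hcover hw)
    exact mem_biUnion hz ⟨hw, ball_subset_closedBall hwz⟩
  refine (measure_mono hsub).trans_lt (measure_biUnion_lt_top ht fun z hz => ?_)
  refine (hausdorffMeasure_sphere_inter_closedBall_le
    (mem_sphere_zero_iff_norm.1 (hts hz)) le_rfl).trans_lt ?_
  rw [hausdorffMeasure_closedBall_euclidean 0 zero_le_one]
  exact ENNReal.mul_lt_top (by simp) (ENNReal.mul_lt_top (by simp)
    hausdorffMeasure_ball_euclidean_lt_top)

lemma exists_hausdorffMeasure_sphere_inter_closedBall_le :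
    ∃ A : ℝ≥0∞, A ≠ ∞ ∧ ∀ (x : ℝ^(n + 1)) (r : ℝ),
      μH[n] (sphere 0 1 ∩ closedBall x r) ≤ A * ENNReal.ofReal r ^ n := by
  refine ⟨6 ^ n * μH[n] (ball (0 : ℝ^n) 1) + 2 ^ n * μH[n] (sphere (0 : ℝ^(n + 1)) 1), ?_,
    fun x r => ?_⟩
  · exact ENNReal.add_ne_top.2
      ⟨ENNReal.mul_ne_top (by simp) hausdorffMeasure_ball_euclidean_lt_top.ne,
        ENNReal.mul_ne_top (by simp) hausdorffMeasure_sphere_lt_top.ne⟩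
  rcases (sphere (0 : ℝ^(n + 1)) 1 ∩ closedBall x r).eq_empty_or_nonempty with he | ⟨z₀, hz₀, hz₀x⟩
  · simp [he]
  rw [mem_closedBall] at hz₀x
  have hr : 0 ≤ r := dist_nonneg.trans hz₀x
  have hsub : sphere 0 1 ∩ closedBall x r ⊆ sphere 0 1 ∩ closedBall z₀ (2 * r) :=
    fun w ⟨hw, hwx⟩ => ⟨hw, by rw [mem_closedBall] at *; linarith [dist_triangle_right w z₀ x]⟩
  have hofReal : ENNReal.ofReal (2 * r) = 2 * ENNReal.ofReal r := by
    rw [ENNReal.ofReal_mul zero_le_two, ENNReal.ofReal_ofNat]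
  refine (measure_mono hsub).trans ?_
  rcases le_or_gt (2 * r) 1 with hr1 | hr1
  · calc _ ≤ 3 ^ n * μH[n] (closedBall (0 : ℝ^n) (2 * r)) :=
          hausdorffMeasure_sphere_inter_closedBall_le (mem_sphere_zero_iff_norm.1 hz₀) hr1
      _ = 6 ^ n * μH[n] (ball (0 : ℝ^n) 1) * ENNReal.ofReal r ^ n := by
          rw [hausdorffMeasure_closedBall_euclidean 0 (by positivity), hofReal,
            show (6 : ℝ≥0∞) ^ n = 3 ^ n * 2 ^ n by rw [← mul_pow]; norm_num]
          ring
      _ ≤ _ := by gcongr; exact le_self_add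
  · calc _ ≤ μH[n] (sphere (0 : ℝ^(n + 1)) 1) := measure_mono inter_subset_left
      _ ≤ ENNReal.ofReal (2 * r) ^ n * μH[n] (sphere (0 : ℝ^(n + 1)) 1) :=
          le_mul_of_one_le_left' (one_le_pow₀ (ENNReal.one_le_ofReal.2 hr1.le))
      _ = 2 ^ n * μH[n] (sphere (0 : ℝ^(n + 1)) 1) * ENNReal.ofReal r ^ n := by
          rw [hofReal]; ring
      _ ≤ _ := by gcongr; exact le_add_self

end Caps

lemma lintegral_inv_dist_pow_le {X : Type*} [PseudoMetricSpace X] [MeasurableSpace X]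
    [OpensMeasurableSpace X] {ν : Measure X} {n : ℕ} {A : ℝ≥0∞} {x : X}
    (hν : ∀ r, ν (closedBall x r) ≤ A * ENNReal.ofReal r ^ n) {δ : ℝ} (hδ : 0 < δ)
    (hνδ : ∀ᵐ z ∂ν, δ ≤ dist x z) :
    ∫⁻ z, ENNReal.ofReal ((dist x z)⁻¹ ^ (n + 1)) ∂ν ≤ A * ENNReal.ofReal (2 ^ (n + 1) / δ) := by
  set S : ℕ → Set X := fun k => {z | 2 ^ k * δ ≤ dist x z} ∩ closedBall x (2 ^ (k + 1) * δ)
  have hcover : ∀ᵐ z ∂ν, z ∈ ⋃ k, S k := by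
    filter_upwards [hνδ] with z hz
    obtain ⟨k, hk1, hk2⟩ := exists_nat_pow_near ((one_le_div hδ).2 hz) one_lt_two
    exact mem_iUnion.2 ⟨k, (le_div_iff₀ hδ).1 hk1, mem_closedBall'.2 ((div_lt_iff₀ hδ).1 hk2).le⟩
  have hS : ∀ k, ∫⁻ z in S k, ENNReal.ofReal ((dist x z)⁻¹ ^ (n + 1)) ∂ν ≤
      A * ENNReal.ofReal (2 ^ n / δ) * 2⁻¹ ^ k := by
    intro k
    have hterm : ((2 ^ k * δ)⁻¹) ^ (n + 1) * (2 ^ (k + 1) * δ) ^ n = 2 ^ n / δ * 2⁻¹ ^ k := by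
      rw [inv_pow, inv_pow]
      field_simp
      ring
    calc _ ≤ ∫⁻ z in S k, ENNReal.ofReal (((2 ^ k * δ)⁻¹) ^ (n + 1)) ∂ν :=
          setLIntegral_mono measurable_const fun z hz =>
            ENNReal.ofReal_le_ofReal (by gcongr; exact hz.1)
      _ = ENNReal.ofReal (((2 ^ k * δ)⁻¹) ^ (n + 1)) * ν (S k) := setLIntegral_const _ _
      _ ≤ ENNReal.ofReal (((2 ^ k * δ)⁻¹) ^ (n + 1)) *
            (A * ENNReal.ofReal (2 ^ (k + 1) * δ) ^ n) := by
          gcongr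
          exact (measure_mono inter_subset_right).trans (hν _)
      _ = A * ENNReal.ofReal (2 ^ n / δ) * 2⁻¹ ^ k := by
          rw [← ENNReal.ofReal_pow (by positivity), mul_left_comm,
            ← ENNReal.ofReal_mul (by positivity), hterm, ENNReal.ofReal_mul (by positivity),
            ENNReal.ofReal_pow (by norm_num), ENNReal.ofReal_inv_of_pos two_pos,
            ENNReal.ofReal_ofNat, mul_assoc]
  calc ∫⁻ z, ENNReal.ofReal ((dist x z)⁻¹ ^ (n + 1)) ∂ν
      = ∫⁻ z in ⋃ k, S k, ENNReal.ofReal ((dist x z)⁻¹ ^ (n + 1)) ∂ν := by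
        rw [Measure.restrict_eq_self_of_ae_mem hcover]
    _ ≤ ∑' k, ∫⁻ z in S k, ENNReal.ofReal ((dist x z)⁻¹ ^ (n + 1)) ∂ν :=
        lintegral_iUnion_le _ _
    _ ≤ ∑' k, A * ENNReal.ofReal (2 ^ n / δ) * 2⁻¹ ^ k := ENNReal.tsum_le_tsum hS
    _ = A * ENNReal.ofReal (2 ^ (n + 1) / δ) := by
        rw [ENNReal.tsum_mul_left, ENNReal.tsum_geometric, ENNReal.one_sub_inv_two, inv_inv,
          mul_assoc, ← ENNReal.ofReal_ofNat 2, ← ENNReal.ofReal_mul (by positivity), pow_succ,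
          mul_div_right_comm]

section Bernstein

variable {μ : Measure ℝ} {φ : ℝ → ℝ}

lemma one_sub_exp_neg_mul_le_div_mul {a b t : ℝ} (ha : 0 < a) (hab : a ≤ b) :
    1 - exp (-(b * t)) ≤ b / a * (1 - exp (-(a * t))) := by
  -- Bernoulli's inequality for `exp (-(b t)) = exp (-(a t)) ^ (b / a)`
  have hbernoulli := one_add_mul_self_le_rpow_one_add
    (by linarith [exp_pos (-(a * t))] : -1 ≤ exp (-(a * t)) - 1) ((one_le_div ha).2 hab)
  rw [add_sub_cancel, ← exp_mul, show -(a * t) * (b / a) = -(b * t) by field_simp] at hbernoulli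
  linarith

lemma bernstein_pos (hint : ∀ l > 0, IntegrableOn (fun t => 1 - exp (-(l * t))) (Ioi 0) μ)
    (hφ : ∀ l > 0, φ l = ∫ t in Ioi 0, (1 - exp (-(l * t))) ∂μ) (hμ : μ (Ioi 0) ≠ 0) {l : ℝ}
    (hl : 0 < l) : 0 < φ l := by
  have hpos : ∀ t ∈ Ioi (0 : ℝ), 0 < 1 - exp (-(l * t)) := fun t ht =>
    sub_pos.2 (exp_lt_one_iff.2 (neg_neg_of_pos (mul_pos hl ht)))
  rw [hφ l hl, setIntegral_pos_iff_support_of_nonneg_ae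
    (ae_restrict_of_forall_mem measurableSet_Ioi fun t ht => (hpos t ht).le) (hint l hl)]
  exact hμ.bot_lt.trans_le (measure_mono fun t ht => ⟨(hpos t ht).ne', ht⟩)

lemma bernstein_monotoneOn (hint : ∀ l > 0, IntegrableOn (fun t => 1 - exp (-(l * t))) (Ioi 0) μ)
    (hφ : ∀ l > 0, φ l = ∫ t in Ioi 0, (1 - exp (-(l * t))) ∂μ) : MonotoneOn φ (Ioi 0) := by
  intro a ha b hb hab
  rw [hφ a ha, hφ b hb]
  refine setIntegral_mono_on (hint a ha) (hint b hb) measurableSet_Ioi fun t ht => ?_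
  have : exp (-(b * t)) ≤ exp (-(a * t)) := exp_le_exp.2 (by nlinarith [mem_Ioi.1 ht])
  linarith

lemma bernstein_div_antitoneOn
    (hint : ∀ l > 0, IntegrableOn (fun t => 1 - exp (-(l * t))) (Ioi 0) μ)
    (hφ : ∀ l > 0, φ l = ∫ t in Ioi 0, (1 - exp (-(l * t))) ∂μ) :
    AntitoneOn (fun l => φ l / l) (Ioi 0) := by
  intro a ha b hb hab
  have h : φ b ≤ b / a * φ a := by
    rw [hφ a ha, hφ b hb, ← integral_const_mul]
    exact setIntegral_mono_on (hint b hb) ((hint a ha).const_mul _) measurableSet_Ioi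
      fun t _ => one_sub_exp_neg_mul_le_div_mul ha hab
  rw [div_mul_eq_mul_div, le_div_iff₀ ha] at h
  rw [div_le_div_iff₀ hb ha]
  linarith

end Bernstein

lemma one_sub_norm_le_norm_sub {E : Type*} [SeminormedAddCommGroup E] {x z : E} (hz : ‖z‖ = 1) :
    1 - ‖x‖ ≤ ‖x - z‖ := by
  linarith [norm_sub_norm_le z x, norm_sub_rev x z]

section SharpKernel

variable {d : ℕ} {φ : ℝ → ℝ}

/-- The comparison function `q(x, z)` of the sharp Poisson kernel estimate. -/
noncomputable def sharpPoissonKernel (φ : ℝ → ℝ) (x z : ℝ^d) : ℝ :=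
  (1 - ‖x‖) / (‖x - z‖ ^ (d + 2) * φ (1 / ‖x - z‖ ^ 2))

def SharpPoissonEstimate (φ : ℝ → ℝ) (c₀ : ℝ) (P : (ℝ^d) → (ℝ^d) → ℝ) : Prop :=
  ∀ x ∈ ball (0 : ℝ^d) 1, ∀ z ∈ sphere (0 : ℝ^d) 1,
    c₀⁻¹ * sharpPoissonKernel φ x z ≤ P x z ∧ P x z ≤ c₀ * sharpPoissonKernel φ x z

variable {x z : ℝ^d}

lemma sharpPoissonKernel_nonneg (hφ : ∀ l, 0 < l → 0 < φ l) (hx : x ∈ ball 0 1)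
    (hz : z ∈ sphere 0 1) : 0 ≤ sharpPoissonKernel φ x z := by
  rw [mem_ball_zero_iff] at hx
  have hw : 0 < ‖x - z‖ := by
    linarith [one_sub_norm_le_norm_sub (x := x) (mem_sphere_zero_iff_norm.1 hz)]
  exact div_nonneg (by linarith) (mul_pos (by positivity) (hφ _ (by positivity))).le

lemma sharpPoissonKernel_le (hφ : ∀ l, 0 < l → 0 < φ l)
    (hφdiv : AntitoneOn (fun l => φ l / l) (Ioi 0)) (hx : x ∈ ball 0 1) (hz : z ∈ sphere 0 1) :
    sharpPoissonKernel φ x z ≤ ((1 - ‖x‖) * φ (1 / (1 - ‖x‖) ^ 2))⁻¹ * ‖x - z‖⁻¹ ^ d := by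
  rw [mem_ball_zero_iff] at hx
  set δ := 1 - ‖x‖
  set w := ‖x - z‖
  have hδ : 0 < δ := by linarith
  have hδw : δ ≤ w := one_sub_norm_le_norm_sub (mem_sphere_zero_iff_norm.1 hz)
  have hw : 0 < w := hδ.trans_le hδw
  have hφδ := hφ (1 / δ ^ 2) (by positivity)
  have hscale : δ ^ 2 * φ (1 / δ ^ 2) ≤ w ^ 2 * φ (1 / w ^ 2) := by
    have h := hφdiv (a := 1 / w ^ 2) (b := 1 / δ ^ 2) (mem_Ioi.2 (by positivity))
      (mem_Ioi.2 (by positivity)) (by gcongr)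
    simp only [div_div_eq_mul_div, div_one] at h
    linarith
  calc sharpPoissonKernel φ x z = δ / (w ^ d * (w ^ 2 * φ (1 / w ^ 2))) := by
        rw [sharpPoissonKernel]; ring
    _ ≤ δ / (w ^ d * (δ ^ 2 * φ (1 / δ ^ 2))) :=
        div_le_div_of_nonneg_left hδ.le (by positivity) (by gcongr)
    _ = (δ * φ (1 / δ ^ 2))⁻¹ * w⁻¹ ^ d := by
        rw [inv_pow]
        field_simp

lemma le_sharpPoissonKernel (hφ : ∀ l, 0 < l → 0 < φ l) (hφmono : MonotoneOn φ (Ioi 0))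
    (hx : x ∈ ball 0 1) (hz : z ∈ sphere 0 1) (hxz : ‖x - z‖ ≤ 2 * (1 - ‖x‖)) :
    (1 - ‖x‖) / ((2 * (1 - ‖x‖)) ^ (d + 2) * φ (1 / (1 - ‖x‖) ^ 2)) ≤
      sharpPoissonKernel φ x z := by
  rw [mem_ball_zero_iff] at hx
  set δ := 1 - ‖x‖
  set w := ‖x - z‖
  have hδ : 0 < δ := by linarith
  have hδw : δ ≤ w := one_sub_norm_le_norm_sub (mem_sphere_zero_iff_norm.1 hz)
  have hw : 0 < w := hδ.trans_le hδw
  have hφw := hφ (1 / w ^ 2) (by positivity)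
  refine div_le_div_of_nonneg_left hδ.le (by positivity)
    (mul_le_mul (by gcongr) ?_ hφw.le (by positivity))
  exact hφmono (mem_Ioi.2 (by positivity)) (mem_Ioi.2 (by positivity)) (by gcongr)

lemma SharpPoissonEstimate.nonneg {c₀ : ℝ} {P : (ℝ^d) → (ℝ^d) → ℝ}
    (hP : SharpPoissonEstimate φ c₀ P) (hφ : ∀ l, 0 < l → 0 < φ l) (hc₀ : 0 < c₀)
    (hx : x ∈ ball 0 1) (hz : z ∈ sphere 0 1) : 0 ≤ P x z :=
  (mul_nonneg (inv_nonneg.2 hc₀.le) (sharpPoissonKernel_nonneg hφ hx hz)).trans (hP x hx z hz).1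

lemma SharpPoissonEstimate.le {c₀ : ℝ} {P : (ℝ^d) → (ℝ^d) → ℝ}
    (hP : SharpPoissonEstimate φ c₀ P) (hφ : ∀ l, 0 < l → 0 < φ l)
    (hφdiv : AntitoneOn (fun l => φ l / l) (Ioi 0)) (hc₀ : 0 ≤ c₀) (hx : x ∈ ball 0 1)
    (hz : z ∈ sphere 0 1) :
    P x z ≤ c₀ * ((1 - ‖x‖) * φ (1 / (1 - ‖x‖) ^ 2))⁻¹ * ‖x - z‖⁻¹ ^ d := by
  rw [mul_assoc]
  exact (hP x hx z hz).2.trans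
    (mul_le_mul_of_nonneg_left (sharpPoissonKernel_le hφ hφdiv hx hz) hc₀)

end SharpKernel

lemma exists_norm_eq_one_norm_sub_eq {E : Type*} [NormedAddCommGroup E] [NormedSpace ℝ E]
    [Nontrivial E] {x : E} (hx : ‖x‖ ≤ 1) : ∃ z : E, ‖z‖ = 1 ∧ ‖x - z‖ = 1 - ‖x‖ := by
  obtain ⟨u, hu, hxu⟩ : ∃ u : E, ‖u‖ = 1 ∧ x = ‖x‖ • u := by
    rcases eq_or_ne x 0 with rfl | hx0
    · obtain ⟨u, hu⟩ := exists_norm_eq E zero_le_one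
      exact ⟨u, hu, by simp⟩
    · have hx0' : ‖x‖ ≠ 0 := norm_ne_zero_iff.2 hx0
      exact ⟨‖x‖⁻¹ • x, by rw [norm_smul, norm_inv, norm_norm, inv_mul_cancel₀ hx0'],
        by rw [smul_smul, mul_inv_cancel₀ hx0', one_smul]⟩
  refine ⟨u, hu, ?_⟩
  conv_lhs => rw [hxu]
  rw [show ‖x‖ • u - u = (‖x‖ - 1) • u by rw [sub_smul, one_smul], norm_smul, hu, mul_one,
    Real.norm_eq_abs, abs_of_nonpos (by linarith), neg_sub]

section PoissonIntegral

variable {n : ℕ} {φ : ℝ → ℝ} {c₀ : ℝ} {P : (ℝ^(n + 1)) → (ℝ^(n + 1)) → ℝ}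

lemma SharpPoissonEstimate.integrableOn_sphere (hP : SharpPoissonEstimate φ c₀ P)
    (hPmeas : Measurable (Function.uncurry P)) (hφ : ∀ l, 0 < l → 0 < φ l)
    (hφdiv : AntitoneOn (fun l => φ l / l) (Ioi 0)) (hc₀ : 0 < c₀) {x : ℝ^(n + 1)}
    (hx : x ∈ ball 0 1) : IntegrableOn (P x) (sphere 0 1) μH[n] := by
  have hδ : 0 < 1 - ‖x‖ := sub_pos.2 (mem_ball_zero_iff.1 hx)
  have hK : 0 ≤ c₀ * ((1 - ‖x‖) * φ (1 / (1 - ‖x‖) ^ 2))⁻¹ :=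
    mul_nonneg hc₀.le (inv_nonneg.2 (mul_pos hδ (hφ _ (by positivity))).le)
  refine Measure.integrableOn_of_bounded hausdorffMeasure_sphere_lt_top.ne
    hPmeas.of_uncurry_left.aestronglyMeasurable
    (M := c₀ * ((1 - ‖x‖) * φ (1 / (1 - ‖x‖) ^ 2))⁻¹ * (1 - ‖x‖)⁻¹ ^ (n + 1))
    (ae_restrict_of_forall_mem isClosed_sphere.measurableSet fun z hz => ?_)
  rw [Real.norm_of_nonneg (hP.nonneg hφ hc₀ hx hz)]
  refine (hP.le hφ hφdiv hc₀.le hx hz).trans (mul_le_mul_of_nonneg_left ?_ hK)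
  exact pow_le_pow_left₀ (by positivity)
    (inv_anti₀ hδ (one_sub_norm_le_norm_sub (mem_sphere_zero_iff_norm.1 hz))) _

lemma SharpPoissonEstimate.exists_setIntegral_sphere_le (hP : SharpPoissonEstimate φ c₀ P)
    (hPmeas : Measurable (Function.uncurry P)) (hφ : ∀ l, 0 < l → 0 < φ l)
    (hφdiv : AntitoneOn (fun l => φ l / l) (Ioi 0)) (hc₀ : 0 < c₀) :
    ∃ C : ℝ, ∀ x ∈ ball (0 : ℝ^(n + 1)) 1, ∫ z in sphere 0 1, P x z ∂μH[n] ≤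
      C * ((1 - ‖x‖) ^ 2 * φ (1 / (1 - ‖x‖) ^ 2))⁻¹ := by
  obtain ⟨A, hA, hcap⟩ := exists_hausdorffMeasure_sphere_inter_closedBall_le (n := n)
  refine ⟨c₀ * A.toReal * 2 ^ (n + 1), fun x hx => ?_⟩
  have hδ : 0 < 1 - ‖x‖ := sub_pos.2 (mem_ball_zero_iff.1 hx)
  have hφδ := hφ (1 / (1 - ‖x‖) ^ 2) (by positivity)
  have hK : 0 ≤ c₀ * ((1 - ‖x‖) * φ (1 / (1 - ‖x‖) ^ 2))⁻¹ :=
    mul_nonneg hc₀.le (inv_nonneg.2 (mul_pos hδ hφδ).le)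
  have hsphere : ∀ᵐ z ∂μH[n].restrict (sphere (0 : ℝ^(n + 1)) 1), 1 - ‖x‖ ≤ dist x z :=
    ae_restrict_of_forall_mem isClosed_sphere.measurableSet fun z hz =>
      (one_sub_norm_le_norm_sub (mem_sphere_zero_iff_norm.1 hz)).trans_eq (dist_eq_norm x z).symm
  have hdist := lintegral_inv_dist_pow_le (fun r => by
    rw [Measure.restrict_apply measurableSet_closedBall, inter_comm]; exact hcap x r) hδ hsphere
  rw [← ENNReal.ofReal_le_ofReal_iff (by positivity), ofReal_integral_eq_lintegral_ofReal
    (hP.integrableOn_sphere hPmeas hφ hφdiv hc₀ hx)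
    (ae_restrict_of_forall_mem isClosed_sphere.measurableSet fun z hz => hP.nonneg hφ hc₀ hx hz)]
  calc ∫⁻ z in sphere 0 1, ENNReal.ofReal (P x z) ∂μH[n]
      ≤ ∫⁻ z in sphere 0 1, ENNReal.ofReal (c₀ * ((1 - ‖x‖) * φ (1 / (1 - ‖x‖) ^ 2))⁻¹) *
          ENNReal.ofReal ((dist x z)⁻¹ ^ (n + 1)) ∂μH[n] :=
        setLIntegral_mono' isClosed_sphere.measurableSet fun z hz => by
          rw [← ENNReal.ofReal_mul hK, dist_eq_norm]
          exact ENNReal.ofReal_le_ofReal (hP.le hφ hφdiv hc₀.le hx hz)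
    _ = ENNReal.ofReal (c₀ * ((1 - ‖x‖) * φ (1 / (1 - ‖x‖) ^ 2))⁻¹) *
          ∫⁻ z in sphere 0 1, ENNReal.ofReal ((dist x z)⁻¹ ^ (n + 1)) ∂μH[n] :=
        lintegral_const_mul' _ _ ENNReal.ofReal_ne_top
    _ ≤ ENNReal.ofReal (c₀ * ((1 - ‖x‖) * φ (1 / (1 - ‖x‖) ^ 2))⁻¹) *
          (A * ENNReal.ofReal (2 ^ (n + 1) / (1 - ‖x‖))) := by gcongr
    _ = _ := by
        conv_lhs => rw [← ENNReal.ofReal_toReal hA]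
        rw [← ENNReal.ofReal_mul ENNReal.toReal_nonneg, ← ENNReal.ofReal_mul hK]
        congr 1
        field_simp

lemma SharpPoissonEstimate.exists_le_setIntegral_sphere (hP : SharpPoissonEstimate φ c₀ P)
    (hPmeas : Measurable (Function.uncurry P)) (hφ : ∀ l, 0 < l → 0 < φ l)
    (hφmono : MonotoneOn φ (Ioi 0)) (hφdiv : AntitoneOn (fun l => φ l / l) (Ioi 0))
    (hc₀ : 0 < c₀) :
    ∃ c > 0, ∀ x ∈ ball (0 : ℝ^(n + 1)) 1,
      c * ((1 - ‖x‖) ^ 2 * φ (1 / (1 - ‖x‖) ^ 2))⁻¹ ≤ ∫ z in sphere 0 1, P x z ∂μH[n] := by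
  set κ := (μH[n] (ball (0 : ℝ^n) 1)).toReal
  have hκ : 0 < κ := ENNReal.toReal_pos hausdorffMeasure_ball_euclidean_pos.ne'
    hausdorffMeasure_ball_euclidean_lt_top.ne
  refine ⟨c₀⁻¹ * κ / 2 ^ (2 * n + 3), by positivity, fun x hx => ?_⟩
  set δ := 1 - ‖x‖
  have hδ : 0 < δ := sub_pos.2 (mem_ball_zero_iff.1 hx)
  have hδ1 : δ ≤ 1 := by linarith [norm_nonneg x]
  have hφδ := hφ (1 / δ ^ 2) (by positivity)
  obtain ⟨z₀, hz₀, hxz₀⟩ := exists_norm_eq_one_norm_sub_eq (mem_ball_zero_iff.1 hx).le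
  set cap := sphere (0 : ℝ^(n + 1)) 1 ∩ closedBall z₀ δ
  have hcap_sub : cap ⊆ sphere 0 1 := inter_subset_left
  have hcap_fin : μH[n] cap ≠ ∞ :=
    ((measure_mono hcap_sub).trans_lt hausdorffMeasure_sphere_lt_top).ne
  have hcap : (δ / 2) ^ n * κ ≤ μH[n].real cap := by
    have h := ENNReal.toReal_mono hcap_fin
      (hausdorffMeasure_closedBall_le_sphere_inter_closedBall hz₀ hδ.le hδ1)
    rwa [hausdorffMeasure_closedBall_euclidean 0 (by positivity), ENNReal.toReal_mul,
      ENNReal.toReal_pow, ENNReal.toReal_ofReal (by positivity)] at h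
  have hP_cap : ∀ z ∈ cap, c₀⁻¹ * (δ / ((2 * δ) ^ (n + 1 + 2) * φ (1 / δ ^ 2))) ≤ P x z := by
    intro z hz
    have hxz : ‖x - z‖ ≤ 2 * δ := by
      linarith [norm_sub_le_norm_sub_add_norm_sub x z₀ z, (dist_eq_norm' z z₀).symm.trans_le hz.2]
    exact (mul_le_mul_of_nonneg_left (le_sharpPoissonKernel hφ hφmono hx hz.1 hxz)
      (by positivity)).trans (hP x hx z hz.1).1
  have hint := hP.integrableOn_sphere hPmeas hφ hφdiv hc₀ hx
  calc c₀⁻¹ * κ / 2 ^ (2 * n + 3) * (δ ^ 2 * φ (1 / δ ^ 2))⁻¹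
      = c₀⁻¹ * (δ / ((2 * δ) ^ (n + 1 + 2) * φ (1 / δ ^ 2))) * ((δ / 2) ^ n * κ) := by
        rw [div_pow, show (2 : ℝ) ^ (2 * n + 3) = 2 ^ n * 2 ^ n * 8 by ring]
        field_simp
        rw [mul_pow]; ring
    _ ≤ c₀⁻¹ * (δ / ((2 * δ) ^ (n + 1 + 2) * φ (1 / δ ^ 2))) * μH[n].real cap := by
        gcongr
    _ ≤ ∫ z in cap, P x z ∂μH[n] :=
        setIntegral_ge_of_const_le_real
          (isClosed_sphere.measurableSet.inter measurableSet_closedBall) hcap_fin hP_cap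
          (hint.mono_set hcap_sub)
    _ ≤ ∫ z in sphere 0 1, P x z ∂μH[n] :=
        setIntegral_mono_set hint (ae_restrict_of_forall_mem isClosed_sphere.measurableSet
          fun z hz => hP.nonneg hφ hc₀ hx hz) hcap_sub.eventuallyLE

end PoissonIntegral

lemma exists_one_le_inv_mul_le_and_le_mul {ι : Type*} {s : Set ι} {f g : ι → ℝ} {a b : ℝ}
    (ha : 0 < a) (hg : ∀ i ∈ s, 0 ≤ g i) (hlow : ∀ i ∈ s, a * g i ≤ f i)
    (hup : ∀ i ∈ s, f i ≤ b * g i) :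
    ∃ C : ℝ, 1 ≤ C ∧ ∀ i ∈ s, C⁻¹ * g i ≤ f i ∧ f i ≤ C * g i := by
  refine ⟨max b (max a⁻¹ 1), le_max_of_le_right (le_max_right _ _), fun i hi => ⟨?_, ?_⟩⟩
  · have hC : (max b (max a⁻¹ 1))⁻¹ ≤ a :=
      inv_le_of_inv_le₀ ha (le_max_of_le_right (le_max_left _ _))
    exact (mul_le_mul_of_nonneg_right hC (hg i hi)).trans (hlow i hi)
  · exact (hup i hi).trans (mul_le_mul_of_nonneg_right (le_max_left _ _) (hg i hi))

theorem poisson_integral_sharp_bound_general (d : ℕ) (hd : 2 ≤ d)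
    (φ : ℝ → ℝ) (μ : Measure ℝ)
    (hμne : μ (Ioi (0 : ℝ)) ≠ 0)
    (hint : ∀ l > (0 : ℝ), IntegrableOn (fun t => 1 - Real.exp (-(l * t))) (Ioi 0) μ)
    (hφ : ∀ l > (0 : ℝ), φ l = ∫ t in Ioi (0 : ℝ), (1 - Real.exp (-(l * t))) ∂μ)
    (P : EuclideanSpace ℝ (Fin d) → EuclideanSpace ℝ (Fin d) → ℝ)
    (hPmeas : Measurable (Function.uncurry P))
    (c₀ : ℝ) (hc₀ : 1 ≤ c₀)
    (hP : ∀ x ∈ Metric.ball (0 : EuclideanSpace ℝ (Fin d)) 1,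
      ∀ z ∈ Metric.sphere (0 : EuclideanSpace ℝ (Fin d)) 1,
        c₀⁻¹ * ((1 - ‖x‖) / (‖x - z‖ ^ (d + 2) * φ (1 / ‖x - z‖ ^ 2))) ≤ P x z ∧
        P x z ≤ c₀ * ((1 - ‖x‖) / (‖x - z‖ ^ (d + 2) * φ (1 / ‖x - z‖ ^ 2)))) :
    ∃ C : ℝ, 1 ≤ C ∧
      ∀ x ∈ Metric.ball (0 : EuclideanSpace ℝ (Fin d)) 1,
        C⁻¹ * ((1 - ‖x‖) ^ 2 * φ (1 / (1 - ‖x‖) ^ 2))⁻¹ ≤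
          (∫ z in Metric.sphere (0 : EuclideanSpace ℝ (Fin d)) 1,
            P x z ∂(μH[((d : ℝ) - 1)])) ∧
        (∫ z in Metric.sphere (0 : EuclideanSpace ℝ (Fin d)) 1,
            P x z ∂(μH[((d : ℝ) - 1)])) ≤
          C * ((1 - ‖x‖) ^ 2 * φ (1 / (1 - ‖x‖) ^ 2))⁻¹ := by
  obtain ⟨n, rfl⟩ : ∃ n, d = n + 1 := ⟨d - 1, by omega⟩
  rw [show ((n + 1 : ℕ) : ℝ) - 1 = n by push_cast; ring]
  have hP' : SharpPoissonEstimate φ c₀ P := hP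
  have hφpos : ∀ l, 0 < l → 0 < φ l := fun l hl => bernstein_pos hint hφ hμne hl
  have hφdiv := bernstein_div_antitoneOn hint hφ
  have hc₀pos : 0 < c₀ := zero_lt_one.trans_le hc₀
  obtain ⟨cU, hU⟩ := hP'.exists_setIntegral_sphere_le hPmeas hφpos hφdiv hc₀pos
  obtain ⟨cL, hcL, hL⟩ := hP'.exists_le_setIntegral_sphere hPmeas hφpos
    (bernstein_monotoneOn hint hφ) hφdiv hc₀pos
  refine exists_one_le_inv_mul_le_and_le_mul hcL (fun x hx => ?_) hL hU
  have hδ : 0 < 1 - ‖x‖ := sub_pos.2 (mem_ball_zero_iff.1 hx)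
  exact inv_nonneg.2 (mul_pos (by positivity) (hφpos _ (by positivity))).le

/-- If `φ` is a Bernstein function without drift and `P` satisfies the
sharp Poisson kernel estimate for `φ` on the unit ball `B ⊂ ℝ^d`, then
`∫_{∂B} P(x,z) σ(dz) ≍ δ(x)^{−2} φ(δ(x)^{−2})^{−1}` with a comparison constant
depending only on `d`, `φ` and `c₀`. -/
theorem poisson_integral_sharp_bound (d : ℕ) (hd : 2 ≤ d)
    (φ : ℝ → ℝ) (μ : Measure ℝ)
    (hμne : μ (Ioi (0 : ℝ)) ≠ 0)
    (hμfin : ∫⁻ t in Ioi (0 : ℝ), ENNReal.ofReal (min 1 t) ∂μ < ⊤)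
    (hint : ∀ l > (0 : ℝ), IntegrableOn (fun t => 1 - Real.exp (-(l * t))) (Ioi 0) μ)
    (hφ : ∀ l > (0 : ℝ), φ l = ∫ t in Ioi (0 : ℝ), (1 - Real.exp (-(l * t))) ∂μ)
    (P : EuclideanSpace ℝ (Fin d) → EuclideanSpace ℝ (Fin d) → ℝ)
    (hPmeas : Measurable (Function.uncurry P))
    (c₀ : ℝ) (hc₀ : 1 ≤ c₀)
    (hP : ∀ x ∈ Metric.ball (0 : EuclideanSpace ℝ (Fin d)) 1,
      ∀ z ∈ Metric.sphere (0 : EuclideanSpace ℝ (Fin d)) 1,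
        c₀⁻¹ * ((1 - ‖x‖) / (‖x - z‖ ^ (d + 2) * φ (1 / ‖x - z‖ ^ 2))) ≤ P x z ∧
        P x z ≤ c₀ * ((1 - ‖x‖) / (‖x - z‖ ^ (d + 2) * φ (1 / ‖x - z‖ ^ 2)))) :
    ∃ C : ℝ, 1 ≤ C ∧
      ∀ x ∈ Metric.ball (0 : EuclideanSpace ℝ (Fin d)) 1,
        C⁻¹ * ((1 - ‖x‖) ^ 2 * φ (1 / (1 - ‖x‖) ^ 2))⁻¹ ≤
          (∫ z in Metric.sphere (0 : EuclideanSpace ℝ (Fin d)) 1,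
            P x z ∂(μH[((d : ℝ) - 1)])) ∧
        (∫ z in Metric.sphere (0 : EuclideanSpace ℝ (Fin d)) 1,
            P x z ∂(μH[((d : ℝ) - 1)])) ≤
          C * ((1 - ‖x‖) ^ 2 * φ (1 / (1 - ‖x‖) ^ 2))⁻¹ :=
  poisson_integral_sharp_bound_general d hd φ μ hμne hint hφ P hPmeas c₀ hc₀ hP
end

section
/- Let D ⊂ ℝ^d be a nonempty bounded open set, δ_D(x) = dist(x, ℝ^d \ D), and let μ_δ be the measure δ_D(x)dx on D. Let f : D × ℝ → ℝ be a Borel function which is continuous in the second variable, and let u₁, u₂ ∈ L¹(D, μ_δ) with u₁ ≤ u₂ μ_δ-almost everywhere. Assume that for every Borel function u : D → ℝ with u₁ ≤ u ≤ u₂ μ_δ-a.e., the function x ↦ f(x, u(x)) belongs to L¹(D, μ_δ). Then the family 𝓕 = { x ↦ f(x, u(x)) : u Borel, u₁ ≤ u ≤ u₂ μ_δ-a.e. } is uniformly integrable with respect to μ_δ (for every ε > 0 there is η > 0 such that ∫_E |f(x,u(x))| μ_δ(dx) < ε for every measurable E with μ_δ(E) < η and every such u), and in particular 𝓕 is bounded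 in L¹(D, μ_δ). -/
/-!
Let `w₁, w₂` be measurable versions of `u₁, u₂`. Clamping a dense sequence `sₙ` to
`[w₁ x, w₂ x]` gives countably many measurable functions `vₙ = max w₁ (min w₂ sₙ)` whose values
are dense in `[w₁ x, w₂ x]` at every `x`. Since `t ↦ |f x t|` is bounded on this compact interval,
some index `n` has `|f x (vₘ x)| ≤ 2 |f x (vₙ x)|` for all `m`, and choosing the least such `n` is measurable in `x`. By continuity of `f x` and
density, the resulting admissible `u*` satisfies `|f x t| ≤ 2 |f x (u* x)|` for all
`t ∈ [w₁ x, w₂ x]`. Hence the single integrable function `2 |f(·, u*(·))|` dominates the whole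
family, which gives both uniform integrability and the `L¹` bound. The multiplicative slack `2`,
rather than an additive one, is what keeps the dominating function integrable without any
finiteness of the measure.
-/

open MeasureTheory Set Function TopologicalSpace

lemma Icc_subset_closure_range_max_min {s : ℕ → ℝ} (hs : DenseRange s) (a b : ℝ) :
    Icc a b ⊆ closure (range fun n => max a (min b (s n))) := by
  intro t ht
  have hclamp : Continuous fun r : ℝ => max a (min b r) := by fun_prop
  have hfix : max a (min b t) = t := by rw [min_eq_right ht.2, max_eq_right ht.1]
  change t ∈ closure (range ((fun r => max a (min b r)) ∘ s))
  rw [range_comp, ← hfix]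
  exact image_closure_subset_closure_image hclamp ⟨t, hs.closure_range ▸ mem_univ t, rfl⟩

lemma exists_forall_le_two_mul {ι : Type*} [Nonempty ι] {a : ι → ℝ} (ha : ∀ i, 0 ≤ a i)
    (hbdd : BddAbove (range a)) : ∃ i, ∀ j, a j ≤ 2 * a i := by
  rcases le_or_gt (⨆ i, a i) 0 with hS | hS
  · obtain ⟨i⟩ := ‹Nonempty ι›
    exact ⟨i, fun j => ((le_ciSup hbdd j).trans hS).trans (by linarith [ha i])⟩
  · obtain ⟨i, hi⟩ := exists_lt_of_lt_ciSup (half_lt_self hS)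
    exact ⟨i, fun j => by linarith [le_ciSup hbdd j]⟩

namespace MeasureTheory

variable {α : Type*} [MeasurableSpace α] {μ : Measure α} {g : α → ℝ}

theorem Integrable.exists_setIntegral_abs_lt_of_ae_abs_le (hg : Integrable g μ) {ε : ℝ}
    (hε : 0 < ε) :
    ∃ η > (0 : ℝ), ∀ E : Set α, MeasurableSet E → μ E < ENNReal.ofReal η →
      ∀ h : α → ℝ, (∀ᵐ x ∂μ, |h x| ≤ g x) → ∫ x in E, |h x| ∂μ < ε := by
  obtain ⟨δ, hδ, hsmall⟩ := exists_pos_setLIntegral_lt_of_measure_lt hg.lintegral_lt_top.ne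
    (ENNReal.ofReal_pos.2 hε).ne'
  obtain ⟨η, -, hη, hηδ⟩ := ENNReal.lt_iff_exists_real_btwn.1 hδ
  refine ⟨η, ENNReal.ofReal_pos.1 hη, fun E hE hμE h hh => ?_⟩
  have hg_nonneg : 0 ≤ᵐ[μ.restrict E] g :=
    ae_restrict_of_ae (hh.mono fun x hx => (abs_nonneg _).trans hx)
  calc ∫ x in E, |h x| ∂μ ≤ ∫ x in E, g x ∂μ :=
        integral_mono_of_nonneg (ae_of_all _ fun _ => abs_nonneg _) hg.restrict
          (ae_restrict_of_ae hh)
    _ = (∫⁻ x in E, ENNReal.ofReal (g x) ∂μ).toReal :=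
        integral_eq_lintegral_of_nonneg_ae hg_nonneg hg.restrict.aestronglyMeasurable
    _ < ε := ENNReal.toReal_lt_of_lt_ofReal (hsmall E (hμE.trans hηδ))

end MeasureTheory

section Superposition

variable {α : Type*} [MeasurableSpace α] {f : α → ℝ → ℝ}

theorem exists_measurable_abs_le_two_mul_abs (hf : Measurable (uncurry f))
    (hfc : ∀ x, Continuous (f x)) {w₁ w₂ : α → ℝ} (hw₁ : Measurable w₁) (hw₂ : Measurable w₂) :
    ∃ u : α → ℝ, Measurable u ∧ (∀ x, w₁ x ≤ w₂ x → u x ∈ Icc (w₁ x) (w₂ x)) ∧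
      ∀ x, ∀ t ∈ Icc (w₁ x) (w₂ x), |f x t| ≤ 2 * |f x (u x)| := by
  classical
  set v : ℕ → α → ℝ := fun n x => max (w₁ x) (min (w₂ x) (denseSeq ℝ n))
  have hv : ∀ n, Measurable (v n) := fun n => hw₁.max (hw₂.min measurable_const)
  have hF : ∀ n, Measurable fun x => |f x (v n x)| := fun n =>
    (hf.comp (measurable_id.prodMk (hv n))).abs
  have hbdd : ∀ x, BddAbove (range fun n => |f x (v n x)|) := by
    intro x
    refine ((isCompact_Icc (a := w₁ x) (b := max (w₁ x) (w₂ x))).bddAbove_image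
      (hfc x).abs.continuousOn).mono ?_
    rintro _ ⟨n, rfl⟩
    exact ⟨v n x, ⟨le_max_left _ _, max_le_max le_rfl (min_le_left _ _)⟩, rfl⟩
  have hmax : ∀ x, ∃ n, ∀ m, |f x (v m x)| ≤ 2 * |f x (v n x)| := fun x =>
    exists_forall_le_two_mul (fun _ => abs_nonneg _) (hbdd x)
  refine ⟨fun x => v (Nat.find (hmax x)) x, Measurable.find hv (fun n => ?_) hmax,
    fun x h => ⟨le_max_left _ _, max_le h (min_le_left _ _)⟩, fun x t ht => ?_⟩
  · simp only [ofPred_forall]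
    exact MeasurableSet.iInter fun m => measurableSet_le (hF m) ((hF n).const_mul 2)
  · refine closure_minimal (by rintro _ ⟨m, rfl⟩; exact Nat.find_spec (hmax x) m)
      (isClosed_le (hfc x).abs continuous_const)
      (Icc_subset_closure_range_max_min (denseRange_denseSeq ℝ) _ _ ht)

variable {μ : Measure α} {u₁ u₂ : α → ℝ}

theorem exists_integrable_dominating_superposition (hf : Measurable (uncurry f))
    (hfc : ∀ x, Continuous (f x)) (hu₁ : AEMeasurable u₁ μ) (hu₂ : AEMeasurable u₂ μ)
    (h12 : ∀ᵐ x ∂μ, u₁ x ≤ u₂ x)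
    (hyp : ∀ u : α → ℝ, Measurable u → (∀ᵐ x ∂μ, u₁ x ≤ u x ∧ u x ≤ u₂ x) →
      Integrable (fun x => f x (u x)) μ) :
    ∃ g : α → ℝ, Integrable g μ ∧ ∀ u : α → ℝ, (∀ᵐ x ∂μ, u₁ x ≤ u x ∧ u x ≤ u₂ x) →
      ∀ᵐ x ∂μ, |f x (u x)| ≤ g x := by
  obtain ⟨u, hu, hu_mem, hu_max⟩ :=
    exists_measurable_abs_le_two_mul_abs hf hfc hu₁.measurable_mk hu₂.measurable_mk
  have hu_adm : ∀ᵐ x ∂μ, u₁ x ≤ u x ∧ u x ≤ u₂ x := by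
    filter_upwards [hu₁.ae_eq_mk, hu₂.ae_eq_mk, h12] with x e₁ e₂ h
    rw [e₁, e₂] at h ⊢
    exact hu_mem x h
  refine ⟨fun x => 2 * |f x (u x)|, (hyp u hu hu_adm).abs.const_mul 2, fun v hv => ?_⟩
  filter_upwards [hu₁.ae_eq_mk, hu₂.ae_eq_mk, hv] with x e₁ e₂ h
  rw [e₁, e₂] at h
  exact hu_max x (v x) h

end Superposition

theorem uniform_integrability_of_superpositions_general (d : ℕ)
    (μδ : Measure (EuclideanSpace ℝ (Fin d)))
    (f : EuclideanSpace ℝ (Fin d) → ℝ → ℝ)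
    (hfmeas : Measurable (Function.uncurry f))
    (hfcont : ∀ x, Continuous (fun t => f x t))
    (u₁ u₂ : EuclideanSpace ℝ (Fin d) → ℝ)
    (hu₁ : Integrable u₁ μδ) (hu₂ : Integrable u₂ μδ)
    (h12 : ∀ᵐ x ∂μδ, u₁ x ≤ u₂ x)
    (hyp : ∀ u : EuclideanSpace ℝ (Fin d) → ℝ, Measurable u →
      (∀ᵐ x ∂μδ, u₁ x ≤ u x ∧ u x ≤ u₂ x) →
      Integrable (fun x => f x (u x)) μδ) :
    (∀ ε > (0 : ℝ), ∃ η > (0 : ℝ),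
      ∀ E : Set (EuclideanSpace ℝ (Fin d)), MeasurableSet E →
        μδ E < ENNReal.ofReal η →
        ∀ u : EuclideanSpace ℝ (Fin d) → ℝ, Measurable u →
          (∀ᵐ x ∂μδ, u₁ x ≤ u x ∧ u x ≤ u₂ x) →
          ∫ x in E, |f x (u x)| ∂μδ < ε) ∧
    (∃ M : ℝ, ∀ u : EuclideanSpace ℝ (Fin d) → ℝ, Measurable u →
      (∀ᵐ x ∂μδ, u₁ x ≤ u x ∧ u x ≤ u₂ x) →
      ∫ x, |f x (u x)| ∂μδ ≤ M) := by
  obtain ⟨g, hg, hdom⟩ := exists_integrable_dominating_superposition hfmeas hfcont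
    hu₁.aemeasurable hu₂.aemeasurable h12 hyp
  refine ⟨fun ε hε => ?_, ⟨∫ x, g x ∂μδ, fun u _ hu => ?_⟩⟩
  · obtain ⟨η, hη, hsmall⟩ := hg.exists_setIntegral_abs_lt_of_ae_abs_le hε
    exact ⟨η, hη, fun E hE hμE u _ hu => hsmall E hE hμE _ (hdom u hu)⟩
  · exact integral_mono_of_nonneg (ae_of_all _ fun _ => abs_nonneg _) hg (hdom u hu)

/-- Uniform integrability (w.r.t. the weighted measure `δ_D(x)dx`) of the
family of superposition functions `x ↦ f(x,u(x))` over Borel `u` squeezed between `u₁`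
and `u₂`, together with boundedness of this family in `L¹(D, δ_D(x)dx)`. -/
theorem uniform_integrability_of_superpositions (d : ℕ)
    (D : Set (EuclideanSpace ℝ (Fin d)))
    (hDopen : IsOpen D) (hDne : D.Nonempty) (hDbdd : Bornology.IsBounded D)
    (μδ : Measure (EuclideanSpace ℝ (Fin d)))
    (hμδ : μδ = (volume.restrict D).withDensity
      (fun x => ENNReal.ofReal (Metric.infDist x Dᶜ)))
    (f : EuclideanSpace ℝ (Fin d) → ℝ → ℝ)
    (hfmeas : Measurable (Function.uncurry f))
    (hfcont : ∀ x, Continuous (fun t => f x t))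
    (u₁ u₂ : EuclideanSpace ℝ (Fin d) → ℝ)
    (hu₁ : Integrable u₁ μδ) (hu₂ : Integrable u₂ μδ)
    (h12 : ∀ᵐ x ∂μδ, u₁ x ≤ u₂ x)
    (hyp : ∀ u : EuclideanSpace ℝ (Fin d) → ℝ, Measurable u →
      (∀ᵐ x ∂μδ, u₁ x ≤ u x ∧ u x ≤ u₂ x) →
      Integrable (fun x => f x (u x)) μδ) :
    (∀ ε > (0 : ℝ), ∃ η > (0 : ℝ),
      ∀ E : Set (EuclideanSpace ℝ (Fin d)), MeasurableSet E →
        μδ E < ENNReal.ofReal η →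
        ∀ u : EuclideanSpace ℝ (Fin d) → ℝ, Measurable u →
          (∀ᵐ x ∂μδ, u₁ x ≤ u x ∧ u x ≤ u₂ x) →
          ∫ x in E, |f x (u x)| ∂μδ < ε) ∧
    (∃ M : ℝ, ∀ u : EuclideanSpace ℝ (Fin d) → ℝ, Measurable u →
      (∀ᵐ x ∂μδ, u₁ x ≤ u x ∧ u x ≤ u₂ x) →
      ∫ x, |f x (u x)| ∂μδ ≤ M) :=
  uniform_integrability_of_superpositions_general d μδ f hfmeas hfcont u₁ u₂ hu₁ hu₂ h12 hyp
end

section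
/- For every real d > 0 and every c > 0 there exists a constant C > 0, depending only on d and c, such that for all a, b, r > 0: ∫₀^{r²} min(ab/t, 1) · t^{−(d/2+2)} · e^{−cr²/t} dt ≤ C · min(ab/r², 1) · r^{−(d+2)}. -/
open MeasureTheory Real Set

/-!
On `(0, r²]` the factor `min(ab/t, 1)` is at most `(r²/t) · min(ab/r², 1)`, which turns the
integrand into `min(ab/r², 1) · r² · t^{-(d/2+3)} e^{-cr²/t}`. Since `x^β e^{-x} ≤ β^β e^{-β}`,
this is bounded uniformly in `t` by a constant times `min(ab/r², 1) · r^{-(d+4)}`, and integrating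
over an interval of length `r²` gives the claim.
-/

namespace Real

theorem rpow_mul_exp_neg_le {β x : ℝ} (hβ : 0 < β) (hx : 0 ≤ x) :
    x ^ β * exp (-x) ≤ β ^ β * exp (-β) := by
  have h := rpow_le_rpow (by positivity) (mul_exp_neg_le_exp_neg_one (x / β)) hβ.le
  rw [mul_rpow (by positivity) (exp_pos _).le, div_rpow hx hβ.le, ← exp_mul, ← exp_mul,
    neg_mul, div_mul_cancel₀ _ hβ.ne', neg_one_mul, div_mul_eq_mul_div,
    div_le_iff₀ (by positivity)] at h
  linarith

theorem rpow_neg_mul_exp_neg_div_le {β l t : ℝ} (hβ : 0 < β) (hl : 0 < l) (ht : 0 < t) :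
    t ^ (-β) * exp (-(l / t)) ≤ β ^ β * exp (-β) * l ^ (-β) := by
  have h := rpow_mul_exp_neg_le hβ (div_pos hl ht).le
  rw [div_rpow hl.le ht.le, div_mul_eq_mul_div, div_le_iff₀ (by positivity)] at h
  rw [rpow_neg ht.le, rpow_neg hl.le, ← div_eq_mul_inv, le_div_iff₀ (by positivity), inv_mul_eq_div,
    div_mul_eq_mul_div, div_le_iff₀ (by positivity)]
  linarith

end Real

theorem min_div_one_le_div_mul_min {u s t : ℝ} (ht : 0 < t) (hts : t ≤ s) :
    min (u / t) 1 ≤ s / t * min (u / s) 1 := by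
  have hst : 1 ≤ s / t := (one_le_div ht).mpr hts
  rw [mul_min_of_nonneg _ _ (by linarith), mul_one, div_mul_div_comm, mul_comm s u,
    mul_div_mul_right _ _ (by linarith : s ≠ 0)]
  exact min_le_min le_rfl hst

theorem min_div_mul_rpow_mul_exp_le {p c s t u : ℝ} (hp : 0 < p + 1) (hc : 0 < c) (hu : 0 ≤ u)
    (ht : 0 < t) (hts : t ≤ s) :
    min (u / t) 1 * t ^ (-p) * exp (-(c * s / t)) ≤
      (p + 1) ^ (p + 1) * exp (-(p + 1)) * c ^ (-(p + 1)) * min (u / s) 1 * s ^ (-p) := by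
  have hs : 0 < s := ht.trans_le hts
  calc min (u / t) 1 * t ^ (-p) * exp (-(c * s / t))
      ≤ s / t * min (u / s) 1 * (t ^ (-p) * exp (-(c * s / t))) := by
        rw [mul_assoc]
        exact mul_le_mul_of_nonneg_right (min_div_one_le_div_mul_min ht hts) (by positivity)
    _ = s * min (u / s) 1 * (t ^ (-(p + 1)) * exp (-(c * s / t))) := by
        rw [neg_add, rpow_add ht, rpow_neg_one]
        field_simp
    _ ≤ s * min (u / s) 1 * ((p + 1) ^ (p + 1) * exp (-(p + 1)) * (c * s) ^ (-(p + 1))) :=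
        mul_le_mul_of_nonneg_left (rpow_neg_mul_exp_neg_div_le hp (by positivity) ht)
          (by positivity)
    _ = _ := by
        rw [mul_rpow hc.le hs.le, neg_add, rpow_add hs, rpow_neg_one]
        field_simp

theorem setIntegral_Ioc_min_div_mul_rpow_mul_exp_le {p c s u : ℝ} (hp : 0 < p + 1) (hc : 0 < c)
    (hu : 0 ≤ u) (hs : 0 < s) :
    ∫ t in Ioc 0 s, min (u / t) 1 * t ^ (-p) * exp (-(c * s / t)) ≤
      (p + 1) ^ (p + 1) * exp (-(p + 1)) * c ^ (-(p + 1)) * min (u / s) 1 * s ^ (1 - p) := by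
  calc _ ≤ ‖∫ t in Ioc 0 s, min (u / t) 1 * t ^ (-p) * exp (-(c * s / t))‖ := le_norm_self _
    _ ≤ (p + 1) ^ (p + 1) * exp (-(p + 1)) * c ^ (-(p + 1)) * min (u / s) 1 * s ^ (-p) *
          volume.real (Ioc 0 s) := by
        refine norm_setIntegral_le_of_norm_le_const measure_Ioc_lt_top fun t ht => ?_
        have ht0 := ht.1
        rw [norm_of_nonneg (by positivity)]
        exact min_div_mul_rpow_mul_exp_le hp hc hu ht0 ht.2
    _ = _ := by
        rw [volume_real_Ioc_of_le hs.le, sub_zero, sub_eq_add_neg, rpow_add hs, rpow_one]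
        ring

/-- For every real `d > 0` and `c > 0` there is `C > 0` (depending only
on `d` and `c`) such that for all `a, b, r > 0`,
`∫₀^{r²} min(ab/t,1) t^{−(d/2+2)} e^{−cr²/t} dt ≤ C min(ab/r²,1) r^{−(d+2)}`. -/
theorem small_time_heat_kernel_integral_bound :
    ∀ d > (0 : ℝ), ∀ c > (0 : ℝ), ∃ C > (0 : ℝ),
      ∀ a > (0 : ℝ), ∀ b > (0 : ℝ), ∀ r > (0 : ℝ),
        (∫ t in Ioc (0 : ℝ) (r ^ 2),
            min (a * b / t) 1 * t ^ (-(d / 2 + 2)) * Real.exp (-(c * r ^ 2 / t))) ≤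
          C * min (a * b / r ^ 2) 1 * r ^ (-(d + 2)) := by
  intro d hd c hc
  refine ⟨(d / 2 + 2 + 1) ^ (d / 2 + 2 + 1) * exp (-(d / 2 + 2 + 1)) * c ^ (-(d / 2 + 2 + 1)),
    by positivity, fun a ha b hb r hr => ?_⟩
  have hr2 : (r ^ 2) ^ (1 - (d / 2 + 2)) = r ^ (-(d + 2)) := by
    rw [← rpow_natCast, ← rpow_mul hr.le]
    ring_nf
  rw [← hr2]
  exact setIntegral_Ioc_min_div_mul_rpow_mul_exp_le (by positivity) hc (by positivity)
    (by positivity)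
end
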